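/- arXiv:1604.01911 — 7 statements merged into one kernel-verified Lean document; each statement's English description precedes it below -/
import Mathlib

section
/- For any real-valued functions f, g on a set V and any x, y ∈ V, |∇_{xy}(f·e^{g/2})|² − (∇_{xy}f)·(∇_{xy}(f·e^g)) = f(x)·f(y)·|∇_{xy}(e^{g/2})|², where ∇_{xy}h = h(y) - h(x). -/
theorem sq_mul_sub_mul_sub_sub_mul_mul_sq_sub {R : Type*} [CommRing R] (a b u v : R) :
    (b * v - a * u) ^ 2 - (b - a) * (b * v ^ 2 - a * u ^ 2) = a * b * (v - u) ^ 2 := by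
  ring

theorem Real.exp_half_sq (x : ℝ) : Real.exp (x / 2) ^ 2 = Real.exp x := by
  rw [Real.exp_half, Real.sq_sqrt (Real.exp_nonneg x)]

theorem nabla_exp_identity {V : Type*} (f g : V → ℝ) (x y : V) :
    |f y * Real.exp (g y / 2) - f x * Real.exp (g x / 2)| ^ 2
      - (f y - f x) * (f y * Real.exp (g y) - f x * Real.exp (g x))
      = f x * f y * |Real.exp (g y / 2) - Real.exp (g x / 2)| ^ 2 := by
  rw [sq_abs, sq_abs, ← Real.exp_half_sq (g x), ← Real.exp_half_sq (g y)]
  exact sq_mul_sub_mul_sub_sub_mul_mul_sq_sub _ _ _ _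
end

section
/- For fixed real numbers s > 0, t > 0 and r ≥ 0, the infimum over κ > 0 of the expression (t/s²)·(cosh(κs/2) − 1) − (κ/2)·r equals −ζ_s(t, r), where ζ_s(t,r) = (1/s²)·( r·s·asinh(rs/t) − √(t² + r²s²) + t ). Equivalently, sup_{κ>0} [ (κ/2)·r − (t/s²)·(cosh(κs/2) − 1) ] = ζ_s(t, r). -/
/-! The objective `κ ↦ κ r / 2 - (t / s²) (cosh (κ s / 2) - 1)` is concave; after the substitution
`x = κ s / 2` its critical point is `x = arsinh (r s / t)`, where the tangent-line inequality for
`cosh` shows it is a global maximum with value `ζ_s(t, r)`. This maximiser is `≥ 0`, so it lies in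
the closure of `κ > 0`, and continuity gives the supremum over `κ > 0`. -/

noncomputable def zeta (s t r : ℝ) : ℝ :=
  (1 / s ^ 2) * (r * s * Real.arsinh (r * s / t) - Real.sqrt (t ^ 2 + r ^ 2 * s ^ 2) + t)

open Real Set

lemma csSup_image_eq_of_mem_closure {α β : Type*} [TopologicalSpace α]
    [ConditionallyCompleteLinearOrder β] [TopologicalSpace β] [OrderTopology β]
    {f : α → β} {s : Set α} {x : α} (hx : x ∈ closure s) (hf : ContinuousWithinAt f s x)
    (hmax : ∀ y ∈ s, f y ≤ f x) : sSup (f '' s) = f x :=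
  (isLUB_of_mem_closure (forall_mem_image.2 hmax) (hf.mem_closure_image hx)).csSup_eq
    ((closure_nonempty_iff.1 ⟨x, hx⟩).image f)

namespace Real

lemma sinh_mul_sub_le_cosh_sub (a x : ℝ) : sinh a * (x - a) ≤ cosh x - cosh a := by
  have hx : exp x = exp a * exp (x - a) := by rw [← exp_add]; ring_nf
  have hnx : exp (-x) = exp (-a) * exp (a - x) := by rw [← exp_add]; ring_nf
  rw [sinh_eq, cosh_eq, cosh_eq, hx, hnx]
  nlinarith [mul_le_mul_of_nonneg_left (add_one_le_exp (x - a)) (exp_pos a).le,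
    mul_le_mul_of_nonneg_left (add_one_le_exp (a - x)) (exp_pos (-a)).le]

lemma mul_cosh_arsinh_div {t : ℝ} (ht : 0 < t) (c : ℝ) :
    t * cosh (arsinh (c / t)) = √(t ^ 2 + c ^ 2) := by
  rw [cosh_arsinh, ← sqrt_sq ht.le, ← sqrt_mul (sq_nonneg t), sqrt_sq ht.le]
  congr 1
  field_simp

lemma mul_sub_mul_cosh_le_arsinh {t : ℝ} (ht : 0 < t) (c x : ℝ) :
    c * x - t * cosh x ≤ c * arsinh (c / t) - t * cosh (arsinh (c / t)) := by
  have h := mul_le_mul_of_nonneg_left (sinh_mul_sub_le_cosh_sub (arsinh (c / t)) x) ht.le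
  rw [sinh_arsinh, ← mul_assoc, mul_div_cancel₀ c ht.ne'] at h
  linarith

end Real

noncomputable def zetaObjective (s t r κ : ℝ) : ℝ :=
  κ / 2 * r - t / s ^ 2 * (cosh (κ * s / 2) - 1)

lemma zetaObjective_eq {s : ℝ} (hs : s ≠ 0) (t r κ : ℝ) :
    zetaObjective s t r κ = (r * s * (κ * s / 2) - t * cosh (κ * s / 2) + t) / s ^ 2 := by
  rw [zetaObjective]
  field_simp
  ring

lemma zeta_eq_zetaObjective {s t : ℝ} (hs : s ≠ 0) (ht : 0 < t) (r : ℝ) :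
    zeta s t r = zetaObjective s t r (2 * arsinh (r * s / t) / s) := by
  rw [zetaObjective_eq hs, show 2 * arsinh (r * s / t) / s * s / 2 = arsinh (r * s / t) by
    field_simp, mul_cosh_arsinh_div ht, zeta]
  ring_nf

lemma zetaObjective_le_zeta {s t : ℝ} (hs : s ≠ 0) (ht : 0 < t) (r κ : ℝ) :
    zetaObjective s t r κ ≤ zeta s t r := by
  rw [zeta_eq_zetaObjective hs ht, zetaObjective_eq hs, zetaObjective_eq hs,
    show 2 * arsinh (r * s / t) / s * s / 2 = arsinh (r * s / t) by field_simp]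
  have hmax := mul_sub_mul_cosh_le_arsinh ht (r * s) (κ * s / 2)
  gcongr

theorem sup_eq_zeta (s t r : ℝ) (hs : 0 < s) (ht : 0 < t) (hr : 0 ≤ r) :
    sSup {y : ℝ | ∃ κ : ℝ, 0 < κ ∧
        y = κ / 2 * r - t / s ^ 2 * (Real.cosh (κ * s / 2) - 1)}
      = zeta s t r := by
  have hset : {y : ℝ | ∃ κ : ℝ, 0 < κ ∧
      y = κ / 2 * r - t / s ^ 2 * (Real.cosh (κ * s / 2) - 1)} = zetaObjective s t r '' Ioi 0 := by
    ext y
    simp only [mem_ofPred_eq, mem_image, mem_Ioi, zetaObjective, eq_comm]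
  have hmaximiser : 2 * arsinh (r * s / t) / s ∈ closure (Ioi 0) := by
    rw [closure_Ioi]
    exact div_nonneg (mul_nonneg zero_le_two (arsinh_nonneg_iff.2 (by positivity))) hs.le
  rw [hset, zeta_eq_zetaObjective hs.ne' ht]
  refine csSup_image_eq_of_mem_closure hmaximiser (by unfold zetaObjective; fun_prop) ?_
  intro κ _
  rw [← zeta_eq_zetaObjective hs.ne' ht]
  exact zetaObjective_le_zeta hs.ne' ht r κ
end

section
/- For fixed s > 0 and r ≥ 0, the function t ↦ ζ_s(t, r) = (1/s²)( rs·asinh(rs/t) − √(t² + r²s²) + t ) is nonincreasing in t on (0, ∞). -/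
/-! With `c = r s`, `ζ_s(t, r) = (c · arsinh (c / t) - √(t² + c²) + t) / s²`, and the bracket has
derivative `1 - √(t² + c²) / t ≤ 0` in `t > 0`. -/

open Real Set

lemma hasDerivAt_mul_arsinh_div_sub_sqrt (c : ℝ) {t : ℝ} (ht : 0 < t) :
    HasDerivAt (fun t => c * arsinh (c / t) - √(t ^ 2 + c ^ 2) + t)
      (1 - √(t ^ 2 + c ^ 2) / t) t := by
  have hpos : 0 < t ^ 2 + c ^ 2 := by positivity
  have hsq : √(t ^ 2 + c ^ 2) ^ 2 = t ^ 2 + c ^ 2 := sq_sqrt hpos.le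
  have hquot : HasDerivAt (fun t => c / t) (-c / t ^ 2) t := by
    simpa [div_eq_mul_inv, neg_div] using (hasDerivAt_inv ht.ne').const_mul c
  have hroot : HasDerivAt (fun t => √(t ^ 2 + c ^ 2)) (2 * t / (2 * √(t ^ 2 + c ^ 2))) t :=
    (((hasDerivAt_pow 2 t).add_const (c ^ 2)).congr_deriv (by ring)).sqrt hpos.ne'
  -- `√(1 + (c/t)²) = √(t² + c²)/t` collapses the chain-rule term to `-c²/(t √(t² + c²))`.
  have hscale : √(1 + (c / t) ^ 2) = √(t ^ 2 + c ^ 2) / t := by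
    rw [show 1 + (c / t) ^ 2 = (t ^ 2 + c ^ 2) / t ^ 2 by field_simp, sqrt_div hpos.le,
      sqrt_sq ht.le]
  refine ((((hquot.arsinh).const_mul c).sub hroot).add (hasDerivAt_id t)).congr_deriv ?_
  rw [hscale, smul_eq_mul]
  field_simp
  linear_combination hsq

lemma antitoneOn_mul_arsinh_div_sub_sqrt (c : ℝ) :
    AntitoneOn (fun t => c * arsinh (c / t) - √(t ^ 2 + c ^ 2) + t) (Ioi 0) := by
  refine antitoneOn_of_hasDerivWithinAt_nonpos (f' := fun t => 1 - √(t ^ 2 + c ^ 2) / t)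
    (convex_Ioi 0)
    (fun t ht => (hasDerivAt_mul_arsinh_div_sub_sqrt c ht).continuousAt.continuousWithinAt)
    (fun t ht => ?_) (fun t ht => ?_) <;> rw [interior_Ioi] at ht
  · exact (hasDerivAt_mul_arsinh_div_sub_sqrt c ht).hasDerivWithinAt
  · rw [sub_nonpos, one_le_div ht]
    exact le_sqrt_of_sq_le (by nlinarith)

theorem zeta_antitone_in_t_general (s r : ℝ) :
    AntitoneOn (fun t => zeta s t r) (Set.Ioi 0) := by
  intro a ha b hb hab
  have h := antitoneOn_mul_arsinh_div_sub_sqrt (r * s) ha hb hab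
  simp only [zeta, ← mul_pow]
  gcongr

theorem zeta_antitone_in_t (s r : ℝ) (hs : 0 < s) (hr : 0 ≤ r) :
    AntitoneOn (fun t => zeta s t r) (Set.Ioi 0) :=
  zeta_antitone_in_t_general s r
end

section
/- For every κ ≥ 0, real numbers a, b with |b − a| ≤ κ·ρ and 0 < ρ ≤ s, one has cosh((b−a)/2) − 1 ≤ (ρ²/s²)·(cosh(κs/2) − 1). -/
/-! Since `cosh x - 1 = 2 sinh² (x / 2)`, the estimate reduces to `sinh (t z) ≤ t sinh z` for
`t = ρ / s ∈ (0, 1]` and `z ≥ 0`, which holds because `sinh` is convex on `[0, ∞)` and vanishes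
at `0`. -/

open Real Set

lemma convexOn_sinh_Ici : ConvexOn ℝ (Ici 0) sinh := by
  refine MonotoneOn.convexOn_of_deriv (convex_Ici 0) continuous_sinh.continuousOn
    differentiable_sinh.differentiableOn ?_
  rw [Real.deriv_sinh, interior_Ici]
  intro x hx y hy hxy
  exact cosh_le_cosh.2 (by rwa [abs_of_pos hx, abs_of_pos hy])

lemma sinh_mul_le_mul_sinh {t z : ℝ} (ht₀ : 0 ≤ t) (ht₁ : t ≤ 1) (hz : 0 ≤ z) :
    sinh (t * z) ≤ t * sinh z := by
  simpa using convexOn_sinh_Ici.2 self_mem_Ici hz (sub_nonneg.2 ht₁) ht₀ (sub_add_cancel 1 t)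

lemma abs_sinh_mul_le {t : ℝ} (ht : |t| ≤ 1) (z : ℝ) : |sinh (t * z)| ≤ |t| * |sinh z| := by
  rw [abs_sinh, abs_sinh, abs_mul]
  exact sinh_mul_le_mul_sinh (abs_nonneg t) ht (abs_nonneg z)

lemma cosh_sub_one_eq (x : ℝ) : cosh x - 1 = 2 * sinh (x / 2) ^ 2 := by
  have h := cosh_two_mul (x / 2)
  rw [mul_div_cancel₀ x two_ne_zero] at h
  rw [h, cosh_sq]
  ring

lemma cosh_mul_sub_one_le {t : ℝ} (ht : |t| ≤ 1) (y : ℝ) :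
    cosh (t * y) - 1 ≤ t ^ 2 * (cosh y - 1) := by
  rw [cosh_sub_one_eq, cosh_sub_one_eq, mul_div_assoc, ← sq_abs (sinh (t * _)),
    ← sq_abs (sinh (y / 2)), ← sq_abs t]
  calc 2 * |sinh (t * (y / 2))| ^ 2 ≤ 2 * (|t| * |sinh (y / 2)|) ^ 2 := by
        gcongr; exact abs_sinh_mul_le ht _
    _ = |t| ^ 2 * (2 * |sinh (y / 2)| ^ 2) := by ring

theorem cosh_lipschitz_estimate_general (κ a b ρ s : ℝ)
    (hab : |b - a| ≤ κ * ρ) (hρ : 0 < ρ) (hρs : ρ ≤ s) :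
    Real.cosh ((b - a) / 2) - 1 ≤ (ρ ^ 2 / s ^ 2) * (Real.cosh (κ * s / 2) - 1) := by
  have hs : 0 < s := hρ.trans_le hρs
  have hratio : |ρ / s| ≤ 1 := by
    rw [abs_of_pos (div_pos hρ hs)]
    exact (div_le_one hs).2 hρs
  have hscale : ρ / s * (κ * s / 2) = κ * ρ / 2 := by field_simp
  have hdist : |(b - a) / 2| ≤ |ρ / s * (κ * s / 2)| := by
    rw [hscale, abs_div, abs_two]
    exact (div_le_div_of_nonneg_right hab zero_le_two).trans (le_abs_self _)
  calc cosh ((b - a) / 2) - 1 ≤ cosh (ρ / s * (κ * s / 2)) - 1 :=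
        sub_le_sub_right (cosh_le_cosh.2 hdist) 1
    _ ≤ (ρ / s) ^ 2 * (cosh (κ * s / 2) - 1) := cosh_mul_sub_one_le hratio _
    _ = ρ ^ 2 / s ^ 2 * (cosh (κ * s / 2) - 1) := by rw [div_pow]

theorem cosh_lipschitz_estimate (κ a b ρ s : ℝ) (hκ : 0 ≤ κ)
    (hab : |b - a| ≤ κ * ρ) (hρ : 0 < ρ) (hρs : ρ ≤ s) :
    Real.cosh ((b - a) / 2) - 1 ≤ (ρ ^ 2 / s ^ 2) * (Real.cosh (κ * s / 2) - 1) :=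
  cosh_lipschitz_estimate_general κ a b ρ s hab hρ hρs
end

section
/- Let Ω be a finite set with measure m : Ω → (0,∞), symmetric weights μ_{xy} ≥ 0, intrinsic metric condition ∑_y μ_{xy}ρ(x,y)² ≤ m_x for a pseudo metric ρ with jump size at most s (i.e. ρ(x,y) ≤ s whenever μ_{xy} > 0), and let ω : Ω → ℝ be κ-Lipschitz with respect to ρ. Then for every f : Ω → ℝ, ∑_{x,y∈Ω} μ_{xy}·f(x)·f(y)·(e^{ω(y)/2} − e^{ω(x)/2})² ≤ (2/s²)(cosh(κs/2) − 1)·∑_{x∈Ω} m_x·f(x)²·e^{ω(x)}. -/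
/-!
The identity `(e^{q/2} - e^{p/2})² = 2 e^{(p+q)/2} (cosh ((q-p)/2) - 1)` together with AM-GM bounds
the `(x, y)` term by `μ_{xy} (cosh ((ω_y - ω_x)/2) - 1) (f_x² e^{ω_x} + f_y² e^{ω_y})`. Since
`cosh (t z) - 1 ≤ t² (cosh z - 1)` for `|t| ≤ 1`, taking `t = ρ(x,y)/s` and `z = κ s / 2` turns the
cosh factor into `ρ(x,y)²/s² · (cosh (κ s / 2) - 1)`. Symmetrizing in `x, y` and using
`∑_y μ_{xy} ρ(x,y)² ≤ m_x` finishes the proof.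
-/

open Real Finset
open scoped Nat

namespace Real

theorem cosh_mul_sub_one_le {t : ℝ} (ht : |t| ≤ 1) (x : ℝ) :
    cosh (t * x) - 1 ≤ t ^ 2 * (cosh x - 1) := by
  -- compare the Taylor series termwise: every term of `cosh x - 1` has degree at least two
  have hseries : HasSum (fun n ↦ t ^ 2 * (x ^ (2 * n) / (2 * n)!) + if n = 0 then 1 - t ^ 2 else 0)
      (t ^ 2 * cosh x + (1 - t ^ 2)) :=
    ((hasSum_cosh x).mul_left _).add (hasSum_ite_eq 0 _)
  have hle := hasSum_le (fun n ↦ ?_) (hasSum_cosh (t * x)) hseries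
  · linarith
  rcases n with _ | n
  · simp
  · have ht2 : t ^ 2 ≤ 1 := by rwa [sq_le_one_iff_abs_le_one]
    have hpow : (t ^ 2) ^ (n + 1) ≤ t ^ 2 := pow_le_of_le_one (sq_nonneg t) ht2 n.succ_ne_zero
    rw [if_neg n.succ_ne_zero, add_zero, mul_pow, pow_mul t, pow_mul x, ← mul_div_assoc]
    gcongr

theorem cosh_sub_one_le_sq_mul {a b t : ℝ} (ht : |t| ≤ 1) (hb : |b| ≤ |t * a|) :
    cosh b - 1 ≤ t ^ 2 * (cosh a - 1) :=
  (sub_le_sub_right (cosh_le_cosh.2 hb) 1).trans (cosh_mul_sub_one_le ht a)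

theorem sq_exp_half_sub_exp_half (p q : ℝ) :
    (exp (q / 2) - exp (p / 2)) ^ 2 = 2 * exp ((p + q) / 2) * (cosh ((q - p) / 2) - 1) := by
  rw [cosh_eq, add_div, sub_div, exp_add, exp_sub, neg_sub, exp_sub]
  field_simp
  ring

theorem mul_mul_exp_add_half_le (u v p q : ℝ) :
    u * v * exp ((p + q) / 2) ≤ (u ^ 2 * exp p + v ^ 2 * exp q) / 2 := by
  have h := two_mul_le_add_sq (u * exp (p / 2)) (v * exp (q / 2))
  have hp : exp p = exp (p / 2) ^ 2 := by rw [sq, ← exp_add, add_halves]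
  have hq : exp q = exp (q / 2) ^ 2 := by rw [sq, ← exp_add, add_halves]
  rw [add_div, exp_add, hp, hq]
  linarith

end Real

theorem Finset.sum_sum_mul_add_of_symm {ι R : Type*} [Fintype ι] [CommSemiring R]
    (K : ι → ι → R) (hK : ∀ x y, K x y = K y x) (F : ι → R) :
    ∑ x, ∑ y, K x y * (F x + F y) = 2 * ∑ x, F x * ∑ y, K x y := by
  have hswap : ∑ x, ∑ y, K x y * F y = ∑ x, ∑ y, K x y * F x := by
    rw [sum_comm]; simp_rw [hK]
  simp only [mul_add, sum_add_distrib, hswap, two_mul, mul_comm (F _), sum_mul]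

theorem edge_term_le {μ ρ s κ a b u v : ℝ} (hμ : 0 ≤ μ) (hs : 0 < s) (hρ : 0 ≤ ρ)
    (hjump : 0 < μ → ρ ≤ s) (hab : |b - a| ≤ κ * ρ) :
    μ * u * v * (exp (b / 2) - exp (a / 2)) ^ 2
      ≤ (cosh (κ * s / 2) - 1) / s ^ 2 * (μ * ρ ^ 2 * (u ^ 2 * exp a + v ^ 2 * exp b)) := by
  rcases hμ.eq_or_lt with rfl | hμ_pos
  · simp
  have hcosh : cosh ((b - a) / 2) - 1 ≤ (ρ / s) ^ 2 * (cosh (κ * s / 2) - 1) := by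
    refine cosh_sub_one_le_sq_mul ?_ ?_
    · exact abs_le.2 ⟨by linarith [div_nonneg hρ hs.le], (div_le_one hs).2 (hjump hμ_pos)⟩
    · calc |(b - a) / 2| = |b - a| / 2 := by rw [abs_div, abs_two]
        _ ≤ κ * ρ / 2 := by gcongr
        _ = ρ / s * (κ * s / 2) := by field_simp
        _ ≤ |ρ / s * (κ * s / 2)| := le_abs_self _
  have hcosh_nonneg : 0 ≤ cosh ((b - a) / 2) - 1 := sub_nonneg.2 (one_le_cosh _)
  calc μ * u * v * (exp (b / 2) - exp (a / 2)) ^ 2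
      = 2 * μ * (cosh ((b - a) / 2) - 1) * (u * v * exp ((a + b) / 2)) := by
        rw [sq_exp_half_sub_exp_half]; ring
    _ ≤ 2 * μ * (cosh ((b - a) / 2) - 1) * ((u ^ 2 * exp a + v ^ 2 * exp b) / 2) := by
        gcongr; exact mul_mul_exp_add_half_le u v a b
    _ ≤ 2 * μ * ((ρ / s) ^ 2 * (cosh (κ * s / 2) - 1)) * ((u ^ 2 * exp a + v ^ 2 * exp b) / 2) := by
        gcongr
    _ = _ := by field_simp

theorem lipschitz_weight_estimate_general {Ω : Type*} [Fintype Ω]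
    (m : Ω → ℝ)
    (μ : Ω → Ω → ℝ) (hμ : ∀ x y, 0 ≤ μ x y) (hsym : ∀ x y, μ x y = μ y x)
    (ρ : Ω → Ω → ℝ) (hρsym : ∀ x y, ρ x y = ρ y x)
    (hρnn : ∀ x y, 0 ≤ ρ x y)
    (hint : ∀ x, ∑ y, μ x y * ρ x y ^ 2 ≤ m x)
    (s : ℝ) (hs : 0 < s) (hjump : ∀ x y, 0 < μ x y → ρ x y ≤ s)
    (κ : ℝ)
    (ω : Ω → ℝ) (hω : ∀ x y, |ω x - ω y| ≤ κ * ρ x y)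
    (f : Ω → ℝ) :
    ∑ x, ∑ y, μ x y * f x * f y * (Real.exp (ω y / 2) - Real.exp (ω x / 2)) ^ 2
      ≤ (2 / s ^ 2) * (Real.cosh (κ * s / 2) - 1)
        * ∑ x, m x * f x ^ 2 * Real.exp (ω x) := by
  set C := (cosh (κ * s / 2) - 1) / s ^ 2
  have hC : 0 ≤ C := div_nonneg (sub_nonneg.2 (one_le_cosh _)) (sq_nonneg s)
  let F x := f x ^ 2 * exp (ω x)
  calc ∑ x, ∑ y, μ x y * f x * f y * (exp (ω y / 2) - exp (ω x / 2)) ^ 2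
      ≤ ∑ x, ∑ y, C * (μ x y * ρ x y ^ 2 * (F x + F y)) :=
        sum_le_sum fun x _ ↦ sum_le_sum fun y _ ↦ edge_term_le (hμ x y) hs (hρnn x y)
          (hjump x y) (by rw [abs_sub_comm]; exact hω x y)
    _ = C * (2 * ∑ x, F x * ∑ y, μ x y * ρ x y ^ 2) := by
        simp_rw [← mul_sum]
        rw [sum_sum_mul_add_of_symm _ (fun x y ↦ by rw [hsym, hρsym])]
    _ ≤ C * (2 * ∑ x, F x * m x) := by
        gcongr with x
        exact hint x
    _ = (2 / s ^ 2) * (cosh (κ * s / 2) - 1) * ∑ x, m x * f x ^ 2 * exp (ω x) := by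
        simp only [C, F, mul_sum]
        exact sum_congr rfl fun x _ ↦ by ring

theorem lipschitz_weight_estimate {Ω : Type*} [Fintype Ω]
    (m : Ω → ℝ) (hm : ∀ x, 0 < m x)
    (μ : Ω → Ω → ℝ) (hμ : ∀ x y, 0 ≤ μ x y) (hsym : ∀ x y, μ x y = μ y x)
    (ρ : Ω → Ω → ℝ) (hρ0 : ∀ x, ρ x x = 0) (hρsym : ∀ x y, ρ x y = ρ y x)
    (hρtri : ∀ x y z, ρ x z ≤ ρ x y + ρ y z) (hρnn : ∀ x y, 0 ≤ ρ x y)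
    (hint : ∀ x, ∑ y, μ x y * ρ x y ^ 2 ≤ m x)
    (s : ℝ) (hs : 0 < s) (hjump : ∀ x y, 0 < μ x y → ρ x y ≤ s)
    (κ : ℝ) (hκ : 0 ≤ κ)
    (ω : Ω → ℝ) (hω : ∀ x y, |ω x - ω y| ≤ κ * ρ x y)
    (f : Ω → ℝ) :
    ∑ x, ∑ y, μ x y * f x * f y * (Real.exp (ω y / 2) - Real.exp (ω x / 2)) ^ 2
      ≤ (2 / s ^ 2) * (Real.cosh (κ * s / 2) - 1)
        * ∑ x, m x * f x ^ 2 * Real.exp (ω x) :=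
  lipschitz_weight_estimate_general m μ hμ hsym ρ hρsym hρnn hint s hs hjump κ ω hω f
end

section
/- Integral maximum principle on a finite graph: Let Ω be a finite set with measure m, symmetric weights μ, intrinsic pseudo metric ρ of jump size ≤ s, Dirichlet Laplacian Δ_Ω with first eigenvalue λ₁(Ω), and ω : Ω → ℝ κ-Lipschitz w.r.t. ρ. If u : [0,∞) × Ω → ℝ solves ∂_t u = Δ_Ω u, then the function t ↦ exp(2λ₁(Ω)t − (2/s²)(cosh(κs/2) − 1)t)·∑_{x∈Ω} m_x·u(t,x)²·e^{ω(x)} is nonincreasing on [0,∞). -/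
/-!
With `E(t) = ∑ₓ mₓ u(t,x)² e^{ω(x)}`, the heat equation and summation by parts give
`E' = -∑ₓ∑ᵧ μₓᵧ (gᵧ - gₓ)(uᵧ - uₓ)` for `g = u e^ω`. In the variable `v = u e^{ω/2}` each edge
term is at most `-(vᵧ - vₓ)² + (vₓ² + vᵧ²)(cosh((ωᵧ - ωₓ)/2) - 1)`. On an edge the Lipschitz
bound and `ρ ≤ s` give `cosh((ωᵧ - ωₓ)/2) - 1 ≤ (ρₓᵧ/s)² (cosh(κs/2) - 1)`, because
`cosh(θy) - 1 ≤ θ² (cosh y - 1)` for `|θ| ≤ 1`. The intrinsic metric bounds the `ρ²`-weighted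
sum by `2 ∑ m v²`, and the Rayleigh quotient bounds the Dirichlet energy of `v` from below by
`2λ₁ ∑ m v²`. Hence `E' ≤ (C - 2λ₁) E` with `C = (2/s²)(cosh(κs/2) - 1)`, and `e^{(2λ₁ - C)t} E(t)`
is nonincreasing.
-/

open Finset Real

namespace Real

lemma sinh_mul_le_mul_sinh {θ y : ℝ} (hθ₀ : 0 ≤ θ) (hθ₁ : θ ≤ 1) (hy : 0 ≤ y) :
    sinh (θ * y) ≤ θ * sinh y := by
  let g z := θ * sinh z - sinh (θ * z)
  have hg (z : ℝ) : HasDerivAt g (θ * cosh z - cosh (θ * z) * θ) z :=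
    ((hasDerivAt_sinh z).const_mul θ).sub <| by simpa using ((hasDerivAt_id' z).const_mul θ).sinh
  have hmono : MonotoneOn g (Set.Ici 0) := by
    refine monotoneOn_of_hasDerivWithinAt_nonneg (convex_Ici 0)
      (fun z _ => (hg z).continuousAt.continuousWithinAt) (fun z _ => (hg z).hasDerivWithinAt)
      fun z hz => ?_
    rw [interior_Ici, Set.mem_Ioi] at hz
    have : cosh (θ * z) ≤ cosh z := by
      rw [cosh_le_cosh, abs_of_nonneg (by positivity), abs_of_pos hz]
      nlinarith
    nlinarith
  simpa [g] using hmono Set.self_mem_Ici hy hy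

lemma cosh_sub_one_eq_two_mul_sinh_sq (x : ℝ) : cosh x - 1 = 2 * sinh (x / 2) ^ 2 := by
  have h := cosh_two_mul (x / 2)
  rw [mul_div_cancel₀ x two_ne_zero, cosh_sq] at h
  linarith

lemma cosh_mul_sub_one_le_s15 {θ : ℝ} (hθ : |θ| ≤ 1) (y : ℝ) :
    cosh (θ * y) - 1 ≤ θ ^ 2 * (cosh y - 1) := by
  rw [← cosh_abs, ← cosh_abs y, abs_mul, cosh_sub_one_eq_two_mul_sinh_sq,
    cosh_sub_one_eq_two_mul_sinh_sq, mul_div_assoc, ← sq_abs θ]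
  have h := sinh_mul_le_mul_sinh (abs_nonneg θ) hθ (y := |y| / 2) (by positivity)
  have h₀ : 0 ≤ sinh (|θ| * (|y| / 2)) := sinh_nonneg_iff.2 (by positivity)
  nlinarith [pow_le_pow_left₀ h₀ h 2]

lemma cosh_half_sub_sub_one_le {a b κ r s : ℝ} (hab : |a - b| ≤ κ * r) (hr : 0 ≤ r)
    (hrs : r ≤ s) (hs : 0 < s) :
    cosh ((b - a) / 2) - 1 ≤ (r / s) ^ 2 * (cosh (κ * s / 2) - 1) := by
  have hθ : |r / s| ≤ 1 := by
    rw [abs_of_nonneg (div_nonneg hr hs.le)]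
    exact div_le_one_of_le₀ hrs hs.le
  calc cosh ((b - a) / 2) - 1 ≤ cosh (r / s * (κ * s / 2)) - 1 := by
        refine sub_le_sub_right (cosh_le_cosh.2 ?_) 1
        rw [show r / s * (κ * s / 2) = κ * r / 2 by field_simp, abs_div, abs_two, abs_sub_comm]
        exact (div_le_div_of_nonneg_right hab zero_le_two).trans (le_abs_self _)
    _ ≤ (r / s) ^ 2 * (cosh (κ * s / 2) - 1) := cosh_mul_sub_one_le_s15 hθ _

lemma neg_sub_mul_exp_mul_sub_le (a b α β : ℝ) :
    -((b * exp β - a * exp α) * (b - a)) ≤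
      -(b * exp (β / 2) - a * exp (α / 2)) ^ 2 +
        ((a * exp (α / 2)) ^ 2 + (b * exp (β / 2)) ^ 2) * (cosh ((β - α) / 2) - 1) := by
  have hexp (γ : ℝ) : exp γ = exp (γ / 2) ^ 2 := by rw [sq, ← exp_add, add_halves]
  have hcosh : exp α + exp β = 2 * exp (α / 2) * exp (β / 2) * cosh ((β - α) / 2) := by
    rw [cosh_eq, hexp α, hexp β, show -((β - α) / 2) = α / 2 - β / 2 by ring, sub_div, exp_sub,
      exp_sub]
    field_simp
    ring
  have hgap : -(b * exp (β / 2) - a * exp (α / 2)) ^ 2 +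
        ((a * exp (α / 2)) ^ 2 + (b * exp (β / 2)) ^ 2) * (cosh ((β - α) / 2) - 1) -
          -((b * exp β - a * exp α) * (b - a)) =
        (a * exp (α / 2) - b * exp (β / 2)) ^ 2 * (cosh ((β - α) / 2) - 1) := by
    rw [hexp α, hexp β] at hcosh ⊢
    linear_combination (-(a * b)) * hcosh
  linarith [mul_nonneg (sq_nonneg (a * exp (α / 2) - b * exp (β / 2)))
    (sub_nonneg.2 (one_le_cosh ((β - α) / 2)))]

end Real

lemma antitoneOn_exp_mul_of_hasDerivAt_le {F F' : ℝ → ℝ} {a : ℝ}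
    (hF : ∀ t, 0 ≤ t → HasDerivAt F (F' t) t) (hF' : ∀ t, 0 ≤ t → F' t ≤ -a * F t) :
    AntitoneOn (fun t => exp (a * t) * F t) (Set.Ici 0) := by
  have hG (t : ℝ) (ht : 0 ≤ t) :
      HasDerivAt (fun t => exp (a * t) * F t) (exp (a * t) * (a * F t + F' t)) t :=
    (((hasDerivAt_id' t).const_mul a).exp.mul (hF t ht)).congr_deriv (by ring)
  refine antitoneOn_of_hasDerivWithinAt_nonpos (convex_Ici 0)
    (fun t ht => (hG t ht).continuousAt.continuousWithinAt)
    (fun t ht => (hG t (interior_subset ht)).hasDerivWithinAt) fun t ht => ?_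
  have ht : 0 ≤ t := interior_subset ht
  exact mul_nonpos_of_nonneg_of_nonpos (exp_pos _).le (by linarith [hF' t ht])

namespace WeightedGraph

variable {Ω : Type*} [Fintype Ω]

noncomputable def laplacian (m : Ω → ℝ) (μ : Ω → Ω → ℝ) (w : Ω → ℝ) (x : Ω) : ℝ :=
  (m x)⁻¹ * ∑ y, μ x y * (w y - w x)

noncomputable def rayleighQuotient (m : Ω → ℝ) (μ : Ω → Ω → ℝ) (g : Ω → ℝ) : ℝ :=
  ((1 / 2) * ∑ x, ∑ y, μ x y * (g y - g x) ^ 2) / (∑ x, m x * g x ^ 2)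

lemma sum_sum_mul_swap_of_symm {K : Ω → Ω → ℝ} (hK : ∀ x y, K x y = K y x)
    (f : Ω → Ω → ℝ) : ∑ x, ∑ y, K x y * f y x = ∑ x, ∑ y, K x y * f x y := by
  rw [Finset.sum_comm]
  exact sum_congr rfl fun x _ => sum_congr rfl fun y _ => by rw [hK]

lemma sum_mul_laplacian {m : Ω → ℝ} {μ : Ω → Ω → ℝ} (hm : ∀ x, m x ≠ 0)
    (hsym : ∀ x y, μ x y = μ y x) (g w : Ω → ℝ) :
    ∑ x, m x * g x * laplacian m μ w x =
      -(1 / 2) * ∑ x, ∑ y, μ x y * ((g y - g x) * (w y - w x)) := by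
  have hsum : ∑ x, m x * g x * laplacian m μ w x = ∑ x, ∑ y, μ x y * (g x * (w y - w x)) := by
    refine sum_congr rfl fun x _ => ?_
    rw [laplacian, mul_sum, mul_sum]
    refine sum_congr rfl fun y _ => ?_
    field_simp [hm x]
  have hswap := sum_sum_mul_swap_of_symm hsym fun x y => g x * (w y - w x)
  have hsplit : ∑ x, ∑ y, μ x y * ((g y - g x) * (w y - w x)) =
      -∑ x, ∑ y, μ x y * (g y * (w x - w y)) - ∑ x, ∑ y, μ x y * (g x * (w y - w x)) := by
    rw [← sum_neg_distrib, ← sum_sub_distrib]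
    refine sum_congr rfl fun x _ => ?_
    rw [← sum_neg_distrib, ← sum_sub_distrib]
    exact sum_congr rfl fun y _ => by ring
  rw [hsum, hsplit, hswap]
  ring

lemma two_mul_sInf_rayleighQuotient_mul_le {m : Ω → ℝ} {μ : Ω → Ω → ℝ} (hm : ∀ x, 0 < m x)
    (hμ : ∀ x y, 0 ≤ μ x y) (v : Ω → ℝ) :
    2 * sInf {q | ∃ g ≠ 0, q = rayleighQuotient m μ g} * ∑ x, m x * v x ^ 2 ≤
      ∑ x, ∑ y, μ x y * (v y - v x) ^ 2 := by
  have henergy (g : Ω → ℝ) : 0 ≤ ∑ x, ∑ y, μ x y * (g y - g x) ^ 2 :=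
    sum_nonneg fun x _ => sum_nonneg fun y _ => mul_nonneg (hμ x y) (sq_nonneg _)
  have hmass (g : Ω → ℝ) : 0 ≤ ∑ x, m x * g x ^ 2 :=
    sum_nonneg fun x _ => mul_nonneg (hm x).le (sq_nonneg _)
  rcases (hmass v).eq_or_lt with hv | hv
  · rw [← hv, mul_zero]
    exact henergy v
  have hv₀ : v ≠ 0 := by
    rintro rfl
    simp at hv
  have hbdd : BddBelow {q | ∃ g ≠ 0, q = rayleighQuotient m μ g} := by
    refine ⟨0, ?_⟩
    rintro q ⟨g, -, rfl⟩
    exact div_nonneg (mul_nonneg (by norm_num) (henergy g)) (hmass g)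
  have hle := csInf_le hbdd ⟨v, hv₀, rfl⟩
  rw [rayleighQuotient, le_div_iff₀ hv] at hle
  linarith

lemma sum_sum_mul_sq_mul_add_sq_le {m : Ω → ℝ} {μ ρ : Ω → Ω → ℝ}
    (hsym : ∀ x y, μ x y = μ y x) (hρsym : ∀ x y, ρ x y = ρ y x)
    (hint : ∀ x, ∑ y, μ x y * ρ x y ^ 2 ≤ m x) (v : Ω → ℝ) :
    ∑ x, ∑ y, μ x y * ρ x y ^ 2 * (v x ^ 2 + v y ^ 2) ≤ 2 * ∑ x, m x * v x ^ 2 := by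
  have hswap := sum_sum_mul_swap_of_symm (K := fun x y => μ x y * ρ x y ^ 2)
    (fun x y => by rw [hsym, hρsym]) fun x _ => v x ^ 2
  have hone (x : Ω) : ∑ y, μ x y * ρ x y ^ 2 * v x ^ 2 ≤ m x * v x ^ 2 := by
    rw [← sum_mul]
    exact mul_le_mul_of_nonneg_right (hint x) (sq_nonneg _)
  simp only [mul_add, sum_add_distrib]
  rw [hswap, ← two_mul]
  exact mul_le_mul_of_nonneg_left (sum_le_sum fun x _ => hone x) zero_le_two

lemma two_mul_sum_mul_exp_mul_laplacian_le {m : Ω → ℝ} {μ ρ : Ω → Ω → ℝ} {s κ : ℝ}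
    {ω : Ω → ℝ} (hm : ∀ x, 0 < m x) (hμ : ∀ x y, 0 ≤ μ x y) (hsym : ∀ x y, μ x y = μ y x)
    (hρsym : ∀ x y, ρ x y = ρ y x) (hρnn : ∀ x y, 0 ≤ ρ x y)
    (hint : ∀ x, ∑ y, μ x y * ρ x y ^ 2 ≤ m x) (hs : 0 < s)
    (hjump : ∀ x y, 0 < μ x y → ρ x y ≤ s) (hω : ∀ x y, |ω x - ω y| ≤ κ * ρ x y)
    (w : Ω → ℝ) :
    2 * ∑ x, m x * (w x * exp (ω x)) * laplacian m μ w x ≤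
      (2 / s ^ 2 * (cosh (κ * s / 2) - 1) -
          2 * sInf {q | ∃ g ≠ 0, q = rayleighQuotient m μ g}) *
        ∑ x, m x * w x ^ 2 * exp (ω x) := by
  set L := cosh (κ * s / 2) - 1
  set v : Ω → ℝ := fun x => w x * exp (ω x / 2)
  have hmass : ∑ x, m x * w x ^ 2 * exp (ω x) = ∑ x, m x * v x ^ 2 := by
    refine sum_congr rfl fun x _ => ?_
    rw [mul_pow, sq (exp _), ← exp_add, add_halves, mul_assoc]
  have hedge (x y : Ω) : μ x y * -((w y * exp (ω y) - w x * exp (ω x)) * (w y - w x)) ≤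
      μ x y * -(v y - v x) ^ 2 + L / s ^ 2 * (μ x y * ρ x y ^ 2 * (v x ^ 2 + v y ^ 2)) := by
    rcases (hμ x y).eq_or_lt with h | h
    · simp [← h]
    have hcosh := cosh_half_sub_sub_one_le (hω x y) (hρnn x y) (hjump x y h) hs
    calc _ ≤ μ x y * (-(v y - v x) ^ 2 + (v x ^ 2 + v y ^ 2) * (cosh ((ω y - ω x) / 2) - 1)) :=
          mul_le_mul_of_nonneg_left (neg_sub_mul_exp_mul_sub_le _ _ _ _) h.le
      _ ≤ μ x y * (-(v y - v x) ^ 2 + (v x ^ 2 + v y ^ 2) * ((ρ x y / s) ^ 2 * L)) := by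
          gcongr
      _ = _ := by ring
  have hsum := sum_le_sum fun x (_ : x ∈ univ) => sum_le_sum fun y (_ : y ∈ univ) => hedge x y
  simp only [sum_add_distrib, ← mul_sum, mul_neg, sum_neg_distrib] at hsum
  have hρ := mul_le_mul_of_nonneg_left (sum_sum_mul_sq_mul_add_sq_le hsym hρsym hint v)
    (div_nonneg (sub_nonneg.2 (one_le_cosh _)) (sq_nonneg s) : 0 ≤ L / s ^ 2)
  have hray := two_mul_sInf_rayleighQuotient_mul_le hm hμ v
  rw [sum_mul_laplacian (fun x => (hm x).ne') hsym, hmass,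
    show 2 / s ^ 2 * L = 2 * (L / s ^ 2) by ring]
  linarith

end WeightedGraph

open WeightedGraph

theorem integral_maximum_principle_general {Ω : Type*} [Fintype Ω]
    (m : Ω → ℝ) (hm : ∀ x, 0 < m x)
    (μ : Ω → Ω → ℝ) (hμ : ∀ x y, 0 ≤ μ x y) (hsym : ∀ x y, μ x y = μ y x)
    (ρ : Ω → Ω → ℝ) (hρsym : ∀ x y, ρ x y = ρ y x)
    (hρnn : ∀ x y, 0 ≤ ρ x y)
    (hint : ∀ x, ∑ y, μ x y * ρ x y ^ 2 ≤ m x)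
    (s : ℝ) (hs : 0 < s) (hjump : ∀ x y, 0 < μ x y → ρ x y ≤ s)
    (lam1 : ℝ)
    (hlam : lam1 = sInf {q : ℝ | ∃ g : Ω → ℝ, g ≠ 0 ∧
        q = ((1 / 2) * ∑ x, ∑ y, μ x y * (g y - g x) ^ 2) / (∑ x, m x * g x ^ 2)})
    (κ : ℝ)
    (ω : Ω → ℝ) (hω : ∀ x y, |ω x - ω y| ≤ κ * ρ x y)
    (u : ℝ → Ω → ℝ)
    (hu : ∀ (t : ℝ) (x : Ω), 0 ≤ t →
      HasDerivAt (fun τ => u τ x) ((m x)⁻¹ * ∑ y, μ x y * (u t y - u t x)) t) :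
    AntitoneOn (fun t =>
        Real.exp (2 * lam1 * t - (2 / s ^ 2) * (Real.cosh (κ * s / 2) - 1) * t)
          * ∑ x, m x * u t x ^ 2 * Real.exp (ω x)) (Set.Ici 0) := by
  have hlam_rayleigh : lam1 = sInf {q | ∃ g ≠ 0, q = rayleighQuotient m μ g} := hlam
  have henergy (t : ℝ) (ht : 0 ≤ t) : HasDerivAt (fun τ => ∑ x, m x * u τ x ^ 2 * exp (ω x))
      (2 * ∑ x, m x * (u t x * exp (ω x)) * laplacian m μ (u t) x) t := by
    refine (HasDerivAt.fun_sum fun x _ =>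
      (((hu t x ht).pow 2).const_mul (m x)).mul_const (exp (ω x))).congr_deriv ?_
    rw [mul_sum]
    exact sum_congr rfl fun x _ => by rw [laplacian]; push_cast; ring
  have hdecay := antitoneOn_exp_mul_of_hasDerivAt_le
    (a := 2 * lam1 - 2 / s ^ 2 * (cosh (κ * s / 2) - 1))
    henergy fun t _ =>
    (two_mul_sum_mul_exp_mul_laplacian_le hm hμ hsym hρsym hρnn hint hs hjump hω (u t)).trans_eq
      (by rw [← hlam_rayleigh]; ring)
  simpa only [sub_mul] using hdecay

theorem integral_maximum_principle {Ω : Type*} [Fintype Ω]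
    (m : Ω → ℝ) (hm : ∀ x, 0 < m x)
    (μ : Ω → Ω → ℝ) (hμ : ∀ x y, 0 ≤ μ x y) (hsym : ∀ x y, μ x y = μ y x)
    (ρ : Ω → Ω → ℝ) (hρ0 : ∀ x, ρ x x = 0) (hρsym : ∀ x y, ρ x y = ρ y x)
    (hρtri : ∀ x y z, ρ x z ≤ ρ x y + ρ y z) (hρnn : ∀ x y, 0 ≤ ρ x y)
    (hint : ∀ x, ∑ y, μ x y * ρ x y ^ 2 ≤ m x)
    (s : ℝ) (hs : 0 < s) (hjump : ∀ x y, 0 < μ x y → ρ x y ≤ s)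
    (lam1 : ℝ)
    (hlam : lam1 = sInf {q : ℝ | ∃ g : Ω → ℝ, g ≠ 0 ∧
        q = ((1 / 2) * ∑ x, ∑ y, μ x y * (g y - g x) ^ 2) / (∑ x, m x * g x ^ 2)})
    (κ : ℝ) (hκ : 0 ≤ κ)
    (ω : Ω → ℝ) (hω : ∀ x y, |ω x - ω y| ≤ κ * ρ x y)
    (u : ℝ → Ω → ℝ)
    (hu : ∀ (t : ℝ) (x : Ω), 0 ≤ t →
      HasDerivAt (fun τ => u τ x) ((m x)⁻¹ * ∑ y, μ x y * (u t y - u t x)) t) :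
    AntitoneOn (fun t =>
        Real.exp (2 * lam1 * t - (2 / s ^ 2) * (Real.cosh (κ * s / 2) - 1) * t)
          * ∑ x, m x * u t x ^ 2 * Real.exp (ω x)) (Set.Ici 0) :=
  integral_maximum_principle_general m hm μ hμ hsym ρ hρsym hρnn hint s hs hjump lam1 hlam κ ω hω u
    hu
end

section
/- For all t > 0 and r > 0, the function ζ(t,r) = r·asinh(r/t) − √(t² + r²) + t satisfies ζ(t, r) ≥ r²/(2t) − r⁴/(6t³); in particular for t ≥ r one has ζ(t,r) ≥ r²/(2t) − r²/(6t) = r²/(3t). -/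
/-! Both terms of `ζ` are bounded by Taylor polynomials: `arsinh x ≥ x - x³/6` for `x ≥ 0`, since
the derivative `(1 + x²)^(-1/2)` of `arsinh` dominates `1 - x²/2`, and `√(t² + r²) ≤ t + r²/(2t)`
by squaring. Multiplying the first by `r` and subtracting the second gives the bound. -/

namespace Real

theorem sqrt_sq_add_le {a b : ℝ} (ha : 0 < a) (hb : 0 ≤ b) : √(a ^ 2 + b) ≤ a + b / (2 * a) := by
  rw [sqrt_le_left (by positivity)]
  have hsq : (a + b / (2 * a)) ^ 2 = a ^ 2 + b + (b / (2 * a)) ^ 2 := by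
    field_simp
    ring
  nlinarith [sq_nonneg (b / (2 * a))]

theorem one_sub_sq_div_two_le_inv_sqrt_one_add_sq (x : ℝ) : 1 - x ^ 2 / 2 ≤ (√(1 + x ^ 2))⁻¹ := by
  have hpos : 0 < √(1 + x ^ 2) := sqrt_pos.2 (by positivity)
  have hle : √(1 + x ^ 2) ≤ 1 + x ^ 2 / 2 := by
    simpa using sqrt_sq_add_le one_pos (sq_nonneg x)
  rw [← one_div, le_div_iff₀ hpos]
  rcases le_total (1 - x ^ 2 / 2) 0 with hneg | hnonneg
  · nlinarith
  · -- `(1 - x²/2) √(1 + x²) ≤ (1 - x²/2)(1 + x²/2) = 1 - x⁴/4`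
    nlinarith [mul_le_mul_of_nonneg_left hle hnonneg]

theorem sub_pow_three_div_six_le_arsinh {x : ℝ} (hx : 0 ≤ x) : x - x ^ 3 / 6 ≤ arsinh x := by
  have hderiv (y : ℝ) : HasDerivAt (fun y ↦ arsinh y - (y - y ^ 3 / 6))
      ((√(1 + y ^ 2))⁻¹ - (1 - y ^ 2 / 2)) y := by
    refine ((hasDerivAt_arsinh y).sub ((hasDerivAt_id' y).sub
      ((hasDerivAt_pow 3 y).div_const 6))).congr_deriv ?_
    norm_num
    ring
  have hmono := monotone_of_hasDerivAt_nonneg hderiv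
    fun y ↦ sub_nonneg.2 (one_sub_sq_div_two_le_inv_sqrt_one_add_sq y)
  simpa using hmono hx

end Real

open Real

theorem zeta_one_lower_bound (t r : ℝ) (ht : 0 < t) (hr : 0 < r) :
    r ^ 2 / (2 * t) - r ^ 4 / (6 * t ^ 3)
        ≤ r * Real.arsinh (r / t) - Real.sqrt (t ^ 2 + r ^ 2) + t ∧
      (r ≤ t → r ^ 2 / (3 * t)
        ≤ r * Real.arsinh (r / t) - Real.sqrt (t ^ 2 + r ^ 2) + t) := by
  have harsinh : r ^ 2 / t - r ^ 4 / (6 * t ^ 3) ≤ r * arsinh (r / t) :=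
    calc r ^ 2 / t - r ^ 4 / (6 * t ^ 3) = r * (r / t - (r / t) ^ 3 / 6) := by
          field_simp
      _ ≤ r * arsinh (r / t) := by
          gcongr
          exact sub_pow_three_div_six_le_arsinh (by positivity)
  have hsqrt : √(t ^ 2 + r ^ 2) ≤ t + r ^ 2 / (2 * t) := sqrt_sq_add_le ht (sq_nonneg r)
  have hmain : r ^ 2 / (2 * t) - r ^ 4 / (6 * t ^ 3)
      ≤ r * arsinh (r / t) - √(t ^ 2 + r ^ 2) + t := by
    have : r ^ 2 / t = r ^ 2 / (2 * t) + r ^ 2 / (2 * t) := by field_simp; ring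
    linarith
  refine ⟨hmain, fun hrt ↦ ?_⟩
  have hquartic : r ^ 4 / (6 * t ^ 3) ≤ r ^ 2 / (6 * t) := by
    rw [div_le_div_iff₀ (by positivity) (by positivity)]
    have hr2 : r ^ 2 ≤ t ^ 2 := pow_le_pow_left₀ hr.le hrt 2
    nlinarith [mul_le_mul_of_nonneg_left hr2 (by positivity : (0 : ℝ) ≤ 6 * t * r ^ 2)]
  have : r ^ 2 / (3 * t) = r ^ 2 / (2 * t) - r ^ 2 / (6 * t) := by field_simp; ring
  linarith
end
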